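/- arXiv:2412.18595 — 2 statements merged into one kernel-verified Lean document; each statement's English description precedes it below -/
import Mathlib

section
/- Any graph with skewness ℓ (i.e., obtainable from a planar graph by adding ℓ edges) has basis number at most 2+ℓ. -/
open scoped Classical

noncomputable section

/-- Helper: quotients of finite types are finite. -/
noncomputable def quotFintype {α : Type} [Fintype α] (r : α → α → Prop) : Fintype (Quot r) :=
  Fintype.ofSurjective (Quot.mk r) fun q => Quot.exists_rep q

/-- A finite multigraph.  Each edge `e` carries an (arbitrarily chosen) ordering of its two
endpoints, `fst e` and `snd e`; a loop is an edge with `fst e = snd e`. -/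
structure Multigraph where
  V : Type
  E : Type
  fintV : Fintype V
  fintE : Fintype E
  fst : E → V
  snd : E → V

attribute [instance] Multigraph.fintV Multigraph.fintE

namespace Multigraph

variable (G : Multigraph)

/-- Incidence of a vertex and an edge, modulo 2 (a loop is incident twice, i.e. 0 mod 2). -/
noncomputable def inc (v : G.V) (e : G.E) : ZMod 2 :=
  (if G.fst e = v then 1 else 0) + (if G.snd e = v then 1 else 0)

/-- The cycle space of `G` over `F_2`: characteristic vectors of edge sets in which every
vertex has even degree (i.e. Eulerian subgraphs), with addition = symmetric difference. -/
noncomputable def cycleSpace : Submodule (ZMod 2) (G.E → ZMod 2) where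
  carrier := {x | ∀ v : G.V, ∑ e : G.E, G.inc v e * x e = 0}
  zero_mem' := by intro v; simp
  add_mem' := by
    intro a b ha hb v
    have h : ∀ e : G.E, G.inc v e * (a + b) e = G.inc v e * a e + G.inc v e * b e := by
      intro e
      show G.inc v e * (a e + b e) = G.inc v e * a e + G.inc v e * b e
      ring
    rw [Finset.sum_congr rfl fun e _ => h e, Finset.sum_add_distrib, ha v, hb v, add_zero]
  smul_mem' := by
    intro c x hx v
    have h : ∀ e : G.E, G.inc v e * (c • x) e = c * (G.inc v e * x e) := by
      intro e
      show G.inc v e * (c * x e) = c * (G.inc v e * x e)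
      ring
    rw [Finset.sum_congr rfl fun e _ => h e, ← Finset.mul_sum, hx v, mul_zero]

/-- The charge of an edge `e` with respect to a collection `B` of (characteristic vectors of)
subgraphs: the number of members of `B` containing `e`. -/
noncomputable def charge (B : Finset (G.E → ZMod 2)) (e : G.E) : ℕ :=
  (B.filter fun x => x e ≠ 0).card

/-- `B` is a basis of the cycle space of `G`. -/
def IsCycleBasis (B : Finset (G.E → ZMod 2)) : Prop :=
  (∀ x ∈ B, x ∈ G.cycleSpace) ∧
    LinearIndependent (ZMod 2) (fun x : B => (x : G.E → ZMod 2)) ∧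
    Submodule.span (ZMod 2) (B : Set (G.E → ZMod 2)) = G.cycleSpace

/-- `B` is a `k`-basis: a basis of the cycle space in which every edge has charge at most `k`. -/
def IsKBasis (k : ℕ) (B : Finset (G.E → ZMod 2)) : Prop :=
  G.IsCycleBasis B ∧ ∀ e : G.E, G.charge B e ≤ k

/-- The basis number of `G`: the least `k` such that `G` has a `k`-basis. -/
noncomputable def basisNum : ℕ := sInf {k | ∃ B, G.IsKBasis k B}

/-- Adjacency of two vertices. -/
def Adj (a b : G.V) : Prop :=
  ∃ e : G.E, (G.fst e = a ∧ G.snd e = b) ∨ (G.fst e = b ∧ G.snd e = a)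

/-- Connectivity. -/
def Connected : Prop :=
  Nonempty G.V ∧ ∀ a b : G.V, Relation.ReflTransGen G.Adj a b

/-- Degree of a vertex (a loop counts twice). -/
noncomputable def degree (v : G.V) : ℕ :=
  ∑ e : G.E, ((if G.fst e = v then 1 else 0) + (if G.snd e = v then 1 else 0))

/-- The subgraph with the same vertex set and edge set restricted to `S`. -/
noncomputable def edgeRestrict (S : Set G.E) : Multigraph where
  V := G.V
  E := S
  fintV := G.fintV
  fintE := (Set.toFinite S).fintype
  fst := fun e => G.fst e.1
  snd := fun e => G.snd e.1

/-- Deletion of a vertex (and all edges incident with it). -/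
noncomputable def deleteVertex (v : G.V) : Multigraph where
  V := {u : G.V // u ≠ v}
  E := {e : G.E // G.fst e ≠ v ∧ G.snd e ≠ v}
  fintV := by classical exact inferInstance
  fintE := by classical exact inferInstance
  fst := fun e => ⟨G.fst e.1, e.2.1⟩
  snd := fun e => ⟨G.snd e.1, e.2.2⟩

/-- `G` is 2-connected: at least 3 vertices, connected, and no cutvertex. -/
def TwoConnected : Prop :=
  G.Connected ∧ 3 ≤ Nat.card G.V ∧ ∀ v : G.V, (G.deleteVertex v).Connected

/-- A cycle of length `n` in `G`: `n` distinct vertices and `n` distinct edges, with edge `i`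
joining vertex `i` to vertex `i+1` (cyclically). -/
def IsCycleOn (n : ℕ) (vs : Fin n → G.V) (es : Fin n → G.E) : Prop :=
  Function.Injective vs ∧ Function.Injective es ∧
    ∀ i : Fin n,
      (G.fst (es i) = vs i ∧ G.snd (es i) = vs (finRotate n i)) ∨
      (G.fst (es i) = vs (finRotate n i) ∧ G.snd (es i) = vs i)

/-- A path with `n` edges, given by its (distinct) vertices and its edges. -/
def IsPathOn (n : ℕ) (vs : Fin (n + 1) → G.V) (es : Fin n → G.E) : Prop :=
  Function.Injective vs ∧
    ∀ i : Fin n,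
      (G.fst (es i) = vs i.castSucc ∧ G.snd (es i) = vs i.succ) ∨
      (G.fst (es i) = vs i.succ ∧ G.snd (es i) = vs i.castSucc)

/-- `p` is the characteristic vector of (the edge set of) a path from `s` to `t`. -/
def IsPathVec (s t : G.V) (p : G.E → ZMod 2) : Prop :=
  ∃ (n : ℕ) (vs : Fin (n + 1) → G.V) (es : Fin n → G.E),
    G.IsPathOn n vs es ∧ vs 0 = s ∧ vs (Fin.last n) = t ∧
      ∀ f : G.E, p f ≠ 0 ↔ ∃ i, es i = f

/-- Two edges lie in a common block: they are equal, or they lie on a common cycle. -/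
def BlockRel (e f : G.E) : Prop :=
  e = f ∨ ∃ (n : ℕ) (vs : Fin n → G.V) (es : Fin n → G.E),
    1 ≤ n ∧ G.IsCycleOn n vs es ∧ (∃ i, es i = e) ∧ (∃ j, es j = f)

/-- `T` is a spanning tree of `G` (as an edge set): the spanning subgraph with edge set `T`
is connected and has no cycles. -/
def IsSpanningTree (T : Set G.E) : Prop :=
  (G.edgeRestrict T).Connected ∧
    ∀ (n : ℕ) (vs : Fin n → (G.edgeRestrict T).V) (es : Fin n → (G.edgeRestrict T).E),
      (G.edgeRestrict T).IsCycleOn n vs es → n = 0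

/-- Contraction of the edge `e`: identify its two endpoints and delete `e`. -/
noncomputable def contract (e : G.E) : Multigraph where
  V := Quot (fun a b : G.V => a = G.fst e ∧ b = G.snd e)
  E := {f : G.E // f ≠ e}
  fintV := quotFintype _
  fintE := by classical exact inferInstance
  fst := fun f => Quot.mk _ (G.fst f.1)
  snd := fun f => Quot.mk _ (G.snd f.1)

/-- Addition of a (possibly parallel) edge joining `u` and `v`. -/
noncomputable def addEdge (u v : G.V) : Multigraph where
  V := G.V
  E := Option G.E
  fintV := G.fintV
  fintE := inferInstance
  fst := fun o => o.elim u G.fst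
  snd := fun o => o.elim v G.snd

/-- Subdivision of the edge `e`: delete `e` and add a new vertex (`none`) joined to both
endpoints of `e`. -/
noncomputable def subdivide (e : G.E) : Multigraph where
  V := Option G.V
  E := {f : G.E // f ≠ e} ⊕ Bool
  fintV := inferInstance
  fintE := by classical exact inferInstance
  fst := Sum.elim (fun f => some (G.fst f.1))
    (fun b => cond b (some (G.fst e)) (some (G.snd e)))
  snd := Sum.elim (fun f => some (G.snd f.1)) (fun _ => none)

/-- Replacement of the edge `e` of `G` by the graph `H` with terminals `s`, `t`:
delete `e`, take the disjoint union with `H`, and identify the endpoints of `e`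
with the terminals. -/
noncomputable def replaceEdge (e : G.E) (H : Multigraph) (s t : H.V) : Multigraph where
  V := Quot (fun a b : G.V ⊕ H.V =>
        (a = Sum.inl (G.fst e) ∧ b = Sum.inr s) ∨ (a = Sum.inl (G.snd e) ∧ b = Sum.inr t))
  E := {f : G.E // f ≠ e} ⊕ H.E
  fintV := quotFintype _
  fintE := by classical exact inferInstance
  fst := Sum.elim (fun f => Quot.mk _ (Sum.inl (G.fst f.1)))
    (fun f => Quot.mk _ (Sum.inr (H.fst f)))
  snd := Sum.elim (fun f => Quot.mk _ (Sum.inl (G.snd f.1)))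
    (fun f => Quot.mk _ (Sum.inr (H.snd f)))

/-! ### Combinatorial embeddings (rotation systems) and planarity -/

/-- Darts: each edge gives two darts. -/
def Dart : Type := G.E × Bool

noncomputable instance : Fintype G.Dart := inferInstanceAs (Fintype (G.E × Bool))

/-- The vertex at which a dart is based. -/
def dartVertex (d : G.Dart) : G.V := cond d.2 (G.fst d.1) (G.snd d.1)

/-- The involution exchanging the two darts of each edge. -/
def dartFlip : Equiv.Perm G.Dart where
  toFun d := (d.1, !d.2)
  invFun d := (d.1, !d.2)
  left_inv := fun d => by cases d; simp; rfl
  right_inv := fun d => by cases d; simp; rfl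

/-- `σ` is a rotation system: its orbits are exactly the sets of darts based at a
common vertex. -/
def IsRotation (σ : Equiv.Perm G.Dart) : Prop :=
  ∀ d d' : G.Dart, σ.SameCycle d d' ↔ G.dartVertex d = G.dartVertex d'

/-- The face permutation of a rotation system. -/
def facePerm (σ : Equiv.Perm G.Dart) : Equiv.Perm G.Dart := G.dartFlip.trans σ

/-- The faces of the embedding given by `σ`: orbits of the face permutation. -/
def Faces (σ : Equiv.Perm G.Dart) : Type := Quot (G.facePerm σ).SameCycle

/-- The face containing a given dart. -/
def faceOf (σ : Equiv.Perm G.Dart) (d : G.Dart) : G.Faces σ := Quot.mk _ d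

noncomputable def numFaces (σ : Equiv.Perm G.Dart) : ℕ := Nat.card (G.Faces σ)

noncomputable def numComponents : ℕ := Nat.card (Quot G.Adj)

/-- The number of connected components containing at least one edge. -/
noncomputable def numEdgedComponents : ℕ :=
  Nat.card {c : Quot G.Adj // ∃ e : G.E, Quot.mk G.Adj (G.fst e) = c}

/-- `σ` is a planar (genus zero) embedding, by Euler's formula
(componentwise `V - E + F = 2`, where components without edges contribute one global face). -/
def IsPlanarRotation (σ : Equiv.Perm G.Dart) : Prop :=
  G.IsRotation σ ∧
    G.numFaces σ + Nat.card G.V = Nat.card G.E + G.numComponents + G.numEdgedComponents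

/-- `G` is planar: it admits a genus-zero combinatorial embedding. -/
def IsPlanar : Prop := ∃ σ : Equiv.Perm G.Dart, G.IsPlanarRotation σ

/-- The boundary of a face, as an element of `F_2^E`: the edges having exactly one of
their two darts on the face. -/
noncomputable def faceBoundary (σ : Equiv.Perm G.Dart) (c : G.Faces σ) : G.E → ZMod 2 :=
  fun e => ∑ b : Bool, if G.faceOf σ (e, b) = c then 1 else 0

/-- The vertex `v` lies on the face `c`. -/
def VertexOnFace (σ : Equiv.Perm G.Dart) (v : G.V) (c : G.Faces σ) : Prop :=
  ∃ d : G.Dart, G.faceOf σ d = c ∧ G.dartVertex d = v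

/-- The edge `e` lies on the face `c`. -/
def EdgeOnFace (σ : Equiv.Perm G.Dart) (e : G.E) (c : G.Faces σ) : Prop :=
  ∃ b : Bool, G.faceOf σ (e, b) = c

end Multigraph

/-! MacLane's argument: in a planar embedding, a set of faces whose boundaries sum to zero
contains, with every face, the faces across each of its edges, hence is a union of whole
components; so dropping one face per component with edges leaves independent face boundaries,
and by Euler's formula together with `dim Z(G) = |E| - |V| + c(G)` they form a basis of the
cycle space in which every edge lies on at most the two faces it borders.
If `G - A` is planar, extend such a basis of `Z(G - A)` by zero to `G`: it spans the cycles of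
`G` vanishing on `A`, a subspace of codimension at most `|A|`, so completing it to a basis of
`Z(G)` adds at most `|A|` vectors, and every edge gains charge at most `|A|`. -/

theorem Equiv.Perm.SameCycle.apply_eq_of_invariant {α β : Type*} [Finite α] {π : Equiv.Perm α}
    {f : α → β} (hf : ∀ x, f (π x) = f x) {x y : α} (h : π.SameCycle x y) : f x = f y := by
  obtain ⟨n, -, rfl⟩ := h.exists_nat_pow_eq
  rw [Equiv.Perm.coe_pow]
  exact (congrFun (Function.iterate_invariant (funext hf) n) x).symm

theorem linearIndependent_zmod_two_iff {ι M : Type*} [AddCommGroup M] [Module (ZMod 2) M]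
    (v : ι → M) :
    LinearIndependent (ZMod 2) v ↔ ∀ s : Finset ι, ∑ i ∈ s, v i = 0 → s = ∅ := by
  rw [linearIndependent_iff']
  constructor
  · intro h s hs
    refine Finset.eq_empty_of_forall_notMem fun i hi => one_ne_zero (h s 1 ?_ i hi)
    simpa using hs
  · intro h s g hg i hi
    have hsupp := h (s.filter fun j => g j ≠ 0) <| by
      rw [Finset.sum_filter]
      refine (Finset.sum_congr rfl fun j _ => ?_).trans hg
      split_ifs with hj
      · rw [(by decide : ∀ a : ZMod 2, a ≠ 0 → a = 1) _ hj, one_smul]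
      · rw [not_not.mp hj, zero_smul]
    by_contra hgi
    exact Finset.notMem_empty i (hsupp ▸ Finset.mem_filter.mpr ⟨hi, hgi⟩)

theorem ZMod.two_indicator_add_eq_zero_iff (P Q : Prop) [Decidable P] [Decidable Q] :
    ((if P then 1 else 0) + (if Q then 1 else 0) : ZMod 2) = 0 ↔ (P ↔ Q) := by
  by_cases hP : P <;> by_cases hQ : Q <;> simp [hP, hQ]; decide

namespace Multigraph

variable (G : Multigraph)

noncomputable instance : Fintype (Quot G.Adj) := quotFintype _

theorem adj_fst_snd (e : G.E) : G.Adj (G.fst e) (G.snd e) := ⟨e, Or.inl ⟨rfl, rfl⟩⟩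

section Dimension

def incMatrix : Matrix G.V G.E (ZMod 2) := Matrix.of G.inc

theorem cycleSpace_eq_ker_incMatrix : G.cycleSpace = LinearMap.ker G.incMatrix.mulVecLin := by
  ext x
  simp only [LinearMap.mem_ker, funext_iff, Matrix.mulVecLin_apply, Matrix.mulVec, dotProduct,
    incMatrix, Matrix.of_apply, Pi.zero_apply]
  rfl

theorem incMatrix_transpose_mulVec_apply (y : G.V → ZMod 2) (e : G.E) :
    G.incMatrix.transpose.mulVec y e = y (G.fst e) + y (G.snd e) := by
  simp [Matrix.mulVec, dotProduct, incMatrix, inc, add_mul, Finset.sum_add_distrib]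

theorem ker_incMatrix_transpose :
    LinearMap.ker G.incMatrix.transpose.mulVecLin =
      LinearMap.range (LinearMap.funLeft (ZMod 2) (ZMod 2) (Quot.mk G.Adj)) := by
  ext y
  rw [LinearMap.mem_ker, LinearMap.mem_range]
  constructor
  · intro hy
    have hedge : ∀ e, y (G.fst e) = y (G.snd e) := fun e => by
      rw [← CharTwo.add_eq_zero, ← incMatrix_transpose_mulVec_apply]
      exact congrFun hy e
    refine ⟨Quot.lift y ?_, rfl⟩
    rintro a b ⟨e, ⟨rfl, rfl⟩ | ⟨rfl, rfl⟩⟩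
    exacts [hedge e, (hedge e).symm]
  · rintro ⟨f, rfl⟩
    funext e
    rw [Matrix.mulVecLin_apply, incMatrix_transpose_mulVec_apply, Pi.zero_apply,
      CharTwo.add_eq_zero]
    exact congrArg f (Quot.sound (G.adj_fst_snd e))

theorem finrank_ker_incMatrix_transpose :
    Module.finrank (ZMod 2) (LinearMap.ker G.incMatrix.transpose.mulVecLin) = G.numComponents := by
  have hinj : Function.Injective (LinearMap.funLeft (ZMod 2) (ZMod 2) (Quot.mk G.Adj)) :=
    LinearMap.funLeft_injective_of_surjective _ _ _ Quot.mk_surjective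
  rw [ker_incMatrix_transpose, LinearMap.finrank_range_of_inj hinj,
    Module.finrank_fintype_fun_eq_card, numComponents, Nat.card_eq_fintype_card]

theorem finrank_cycleSpace_add_card :
    Module.finrank (ZMod 2) G.cycleSpace + Nat.card G.V = Nat.card G.E + G.numComponents := by
  have hrank := G.incMatrix.rank_transpose
  have hker := G.finrank_ker_incMatrix_transpose
  have h := LinearMap.finrank_range_add_finrank_ker G.incMatrix.mulVecLin
  have hT := LinearMap.finrank_range_add_finrank_ker G.incMatrix.transpose.mulVecLin
  simp only [Matrix.rank, Module.finrank_fintype_fun_eq_card] at hrank h hT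
  rw [cycleSpace_eq_ker_incMatrix, Nat.card_eq_fintype_card, Nat.card_eq_fintype_card]
  omega

end Dimension

section Faces

variable (σ : Equiv.Perm G.Dart)

noncomputable instance : Fintype (G.Faces σ) := quotFintype _

theorem sum_inc_mul (v : G.V) (x : G.E → ZMod 2) :
    ∑ e : G.E, G.inc v e * x e = ∑ d : G.Dart, if G.dartVertex d = v then x d.1 else 0 := by
  refine Eq.trans ?_ (Fintype.sum_prod_type fun d : G.E × Bool =>
    if G.dartVertex d = v then x d.1 else 0).symm
  refine Finset.sum_congr rfl fun e _ => ?_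
  simp only [inc, dartVertex, Fintype.sum_bool, add_mul, ite_mul, one_mul, zero_mul, cond_true,
    cond_false]
  congr

theorem faceBoundary_apply (c : G.Faces σ) (e : G.E) :
    G.faceBoundary σ c e =
      (if G.faceOf σ (e, true) = c then 1 else 0) +
        (if G.faceOf σ (e, false) = c then 1 else 0) :=
  Fintype.sum_bool _

theorem faceBoundary_apply_dart (c : G.Faces σ) (d : G.Dart) :
    G.faceBoundary σ c d.1 =
      (if G.faceOf σ d = c then 1 else 0) + (if G.faceOf σ (G.dartFlip d) = c then 1 else 0) := by
  obtain ⟨e, _ | _⟩ := d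
  · exact (G.faceBoundary_apply σ c e).trans (add_comm _ _)
  · exact G.faceBoundary_apply σ c e

theorem faceOf_dartFlip (d : G.Dart) : G.faceOf σ (G.dartFlip d) = G.faceOf σ (σ d) :=
  Quot.sound ⟨1, congrArg σ (G.dartFlip.left_inv d)⟩

theorem eq_or_eq_of_faceBoundary_ne_zero {c : G.Faces σ} {e : G.E}
    (h : G.faceBoundary σ c e ≠ 0) :
    c = G.faceOf σ (e, true) ∨ c = G.faceOf σ (e, false) := by
  contrapose! h
  rw [faceBoundary_apply, if_neg (Ne.symm h.1), if_neg (Ne.symm h.2), add_zero]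

theorem sum_faceBoundary_apply (T : Finset (G.Faces σ)) (e : G.E) :
    (∑ c ∈ T, G.faceBoundary σ c) e =
      (if G.faceOf σ (e, true) ∈ T then 1 else 0) +
        (if G.faceOf σ (e, false) ∈ T then 1 else 0) := by
  simp only [Finset.sum_apply, faceBoundary_apply, Finset.sum_add_distrib, Finset.sum_ite_eq]

variable {G σ}

theorem IsRotation.dartVertex_apply (hrot : G.IsRotation σ) (d : G.Dart) :
    G.dartVertex (σ d) = G.dartVertex d :=
  ((hrot d (σ d)).mp ⟨1, rfl⟩).symm

theorem IsRotation.faceBoundary_mem_cycleSpace (hrot : G.IsRotation σ) (c : G.Faces σ) :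
    G.faceBoundary σ c ∈ G.cycleSpace := by
  intro v
  set g : G.Dart → ZMod 2 := fun d => if G.dartVertex d = v ∧ G.faceOf σ d = c then 1 else 0
  -- the darts at `v` on `c`, and the darts at `v` whose flip is on `c`, are matched by `σ`
  have hσ : ∑ d, g (σ d) = ∑ d, g d := Equiv.sum_comp σ g
  rw [sum_inc_mul]
  calc ∑ d : G.Dart, (if G.dartVertex d = v then G.faceBoundary σ c d.1 else 0)
      = ∑ d, (g d + g (σ d)) := by
        refine Finset.sum_congr rfl fun d _ => ?_
        simp only [g, faceBoundary_apply_dart, faceOf_dartFlip, hrot.dartVertex_apply]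
        split_ifs <;> simp_all
    _ = 0 := by rw [Finset.sum_add_distrib, hσ, CharTwo.add_self_eq_zero]

theorem IsRotation.faceOf_mem_iff_of_component_eq (hrot : G.IsRotation σ) (T : Set (G.Faces σ))
    (hT : ∀ e, G.faceOf σ (e, true) ∈ T ↔ G.faceOf σ (e, false) ∈ T) {d d' : G.Dart}
    (h : Quot.mk G.Adj (G.dartVertex d) = Quot.mk G.Adj (G.dartVertex d')) :
    G.faceOf σ d ∈ T ↔ G.faceOf σ d' ∈ T := by
  have hflip : ∀ d, G.faceOf σ (G.dartFlip d) ∈ T ↔ G.faceOf σ d ∈ T := by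
    rintro ⟨e, _ | _⟩
    exacts [hT e, (hT e).symm]
  have hvertex : ∀ d d', G.dartVertex d = G.dartVertex d' →
      (G.faceOf σ d ∈ T ↔ G.faceOf σ d' ∈ T) := fun d d' hdd' =>
    Iff.of_eq <| ((hrot d d').mpr hdd').apply_eq_of_invariant (f := fun d => G.faceOf σ d ∈ T)
      fun d => propext <| by rw [← faceOf_dartFlip, hflip]
  -- membership in `T` is constant on the darts at a vertex, hence a function of the vertex
  let onT (v : G.V) : Prop := ∃ d, G.dartVertex d = v ∧ G.faceOf σ d ∈ T
  have honT : ∀ d, onT (G.dartVertex d) ↔ G.faceOf σ d ∈ T := fun d =>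
    ⟨fun ⟨d', hd', hT'⟩ => (hvertex d' d hd').mp hT', fun hd => ⟨d, rfl, hd⟩⟩
  have hadj : ∀ a b, G.Adj a b → onT a = onT b := by
    rintro a b ⟨e, ⟨rfl, rfl⟩ | ⟨rfl, rfl⟩⟩
    · exact propext <| (honT (e, true)).trans <| (hT e).trans (honT (e, false)).symm
    · exact propext <| (honT (e, false)).trans <| (hT e).symm.trans (honT (e, true)).symm
  rw [← honT, ← honT]
  exact Iff.of_eq (congrArg (Quot.lift onT hadj) h)

theorem IsRotation.component_eq_of_faceOf_eq (hrot : G.IsRotation σ) {d d' : G.Dart}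
    (h : G.faceOf σ d = G.faceOf σ d') :
    Quot.mk G.Adj (G.dartVertex d) = Quot.mk G.Adj (G.dartVertex d') := by
  have hflip : ∀ d,
      Quot.mk G.Adj (G.dartVertex (G.dartFlip d)) = Quot.mk G.Adj (G.dartVertex d) := by
    rintro ⟨e, _ | _⟩
    exacts [Quot.sound (G.adj_fst_snd e), (Quot.sound (G.adj_fst_snd e)).symm]
  have hinv : ∀ d,
      Quot.mk G.Adj (G.dartVertex (G.facePerm σ d)) = Quot.mk G.Adj (G.dartVertex d) :=
    fun d => (congrArg _ (hrot.dartVertex_apply _)).trans (hflip d)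
  exact congrArg (Quot.lift _ fun _ _ hs =>
    hs.apply_eq_of_invariant (f := fun d => Quot.mk G.Adj (G.dartVertex d)) hinv) h

end Faces

abbrev EdgedComponent : Type := {c : Quot G.Adj // ∃ e : G.E, Quot.mk G.Adj (G.fst e) = c}

section CycleBases

theorem charge_image_le {ι : Type*} (s : Finset ι) (v : ι → G.E → ZMod 2) (e : G.E) :
    G.charge (s.image v) e ≤ (s.filter fun i => v i e ≠ 0).card := by
  rw [charge, Finset.filter_image]
  exact Finset.card_image_le

theorem charge_le_charge_add_card_sdiff (B₁ B : Finset (G.E → ZMod 2)) (e : G.E) :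
    G.charge B e ≤ G.charge B₁ e + (B \ B₁).card := by
  refine (Finset.card_le_card fun x hx => ?_).trans (Finset.card_union_le _ _)
  obtain ⟨hxB, hxe⟩ := Finset.mem_filter.mp hx
  by_cases hx₁ : x ∈ B₁
  · exact Finset.mem_union_left _ (Finset.mem_filter.mpr ⟨hx₁, hxe⟩)
  · exact Finset.mem_union_right _ (Finset.mem_sdiff.mpr ⟨hxB, hx₁⟩)

theorem IsCycleBasis.card_eq_finrank {B : Finset (G.E → ZMod 2)} (hB : G.IsCycleBasis B) :
    B.card = Module.finrank (ZMod 2) G.cycleSpace := by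
  rw [← hB.2.2, finrank_span_finset_eq_card hB.2.1]

theorem isCycleBasis_image_of_linearIndependent {ι : Type*} [Fintype ι]
    {v : ι → G.E → ZMod 2} (hv : LinearIndependent (ZMod 2) v)
    (hmem : ∀ i, v i ∈ G.cycleSpace)
    (hcard : Fintype.card ι = Module.finrank (ZMod 2) G.cycleSpace) :
    G.IsCycleBasis (Finset.univ.image v) := by
  have hrange : ((Finset.univ.image v : Finset _) : Set (G.E → ZMod 2)) = Set.range v := by
    simp
  have hli : LinearIndepOn (ZMod 2) id ((Finset.univ.image v : Finset _) : Set (G.E → ZMod 2)) :=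
    hrange ▸ (linearIndepOn_id_range_iff hv.injective).mpr hv
  refine ⟨fun x hx => ?_, hli, Submodule.eq_of_le_of_finrank_le ?_ ?_⟩
  · obtain ⟨i, -, rfl⟩ := Finset.mem_image.mp hx
    exact hmem i
  · rw [Submodule.span_le, hrange]
    exact Set.range_subset_iff.mpr hmem
  · rw [finrank_span_finset_eq_card hli, Finset.card_image_of_injective _ hv.injective,
      Finset.card_univ, hcard]

theorem exists_isCycleBasis_superset {B₁ : Finset (G.E → ZMod 2)}
    (hmem : ∀ x ∈ B₁, x ∈ G.cycleSpace)
    (hli : LinearIndepOn (ZMod 2) id (B₁ : Set (G.E → ZMod 2))) :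
    ∃ B, B₁ ⊆ B ∧ G.IsCycleBasis B := by
  obtain ⟨b, hbZ, hb₁, hZb, hbli⟩ := exists_linearIndepOn_extension hli hmem
  have hfin : b.Finite := Set.toFinite b
  refine ⟨hfin.toFinset, fun x hx => hfin.mem_toFinset.mpr (hb₁ hx), fun x hx => hbZ
    (hfin.mem_toFinset.mp hx), ?_, ?_⟩
  · change LinearIndepOn (ZMod 2) id (hfin.toFinset : Set (G.E → ZMod 2))
    rwa [hfin.coe_toFinset]
  rw [hfin.coe_toFinset]
  refine le_antisymm (Submodule.span_le.mpr hbZ) fun x hx => ?_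
  simpa using hZb ⟨x, hx, rfl⟩

end CycleBases

section MacLane

variable {G} {σ : Equiv.Perm G.Dart}

def rootDart (κ : G.EdgedComponent) : G.Dart := (κ.2.choose, true)

variable (σ) in
def rootFace (κ : G.EdgedComponent) : G.Faces σ := G.faceOf σ (rootDart κ)

theorem component_rootDart (κ : G.EdgedComponent) :
    Quot.mk G.Adj (G.dartVertex (rootDart κ)) = κ.1 :=
  κ.2.choose_spec

theorem IsRotation.rootFace_injective (hrot : G.IsRotation σ) :
    Function.Injective (G.rootFace σ) :=
  fun κ κ' h => Subtype.ext <| by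
    rw [← component_rootDart κ, ← component_rootDart κ']
    exact hrot.component_eq_of_faceOf_eq h

theorem IsRotation.linearIndependent_faceBoundary (hrot : G.IsRotation σ) :
    LinearIndependent (ZMod 2)
      fun c : {c // c ∉ Set.range (G.rootFace σ)} => G.faceBoundary σ c := by
  rw [linearIndependent_zmod_two_iff]
  intro s hs
  let T := s.map (Function.Embedding.subtype _)
  have hT : ∀ e, G.faceOf σ (e, true) ∈ T ↔ G.faceOf σ (e, false) ∈ T := fun e => by
    rw [← ZMod.two_indicator_add_eq_zero_iff, ← sum_faceBoundary_apply, Finset.sum_map]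
    exact congrFun hs e
  -- a face of `T` forces the root face of its component into `T`, but root faces are not in `s`
  refine Finset.eq_empty_of_forall_notMem fun c hc => ?_
  obtain ⟨d, hd⟩ := Quot.exists_rep c.1
  let κ : G.EdgedComponent := ⟨Quot.mk G.Adj (G.dartVertex d), d.1, by
    obtain ⟨e, _ | _⟩ := d
    exacts [Quot.sound (G.adj_fst_snd e), rfl]⟩
  have hdT : G.faceOf σ d ∈ T := by
    rw [faceOf, hd]
    exact Finset.mem_map_of_mem _ hc
  have hroot : G.rootFace σ κ ∈ (T : Set (G.Faces σ)) :=
    (hrot.faceOf_mem_iff_of_component_eq _ hT (component_rootDart κ)).mpr hdT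
  obtain ⟨c', hc', hc'eq⟩ := Finset.mem_map.mp hroot
  exact c'.2 ⟨κ, hc'eq.symm⟩

theorem IsPlanarRotation.card_compl_range_rootFace (hσ : G.IsPlanarRotation σ) :
    Fintype.card {c // c ∉ Set.range (G.rootFace σ)} = Module.finrank (ZMod 2) G.cycleSpace := by
  have heuler : Nat.card (G.Faces σ) + Nat.card G.V =
      Nat.card G.E + G.numComponents + Nat.card G.EdgedComponent := hσ.2
  have hdim := G.finrank_cycleSpace_add_card
  have hroots := Set.card_range_of_injective hσ.1.rootFace_injective
  rw [Fintype.card_subtype_compl, hroots, ← Nat.card_eq_fintype_card (α := G.EdgedComponent),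
    ← Nat.card_eq_fintype_card]
  omega

end MacLane

theorem exists_isKBasis_two_of_isPlanar (hG : G.IsPlanar) : ∃ B, G.IsKBasis 2 B := by
  obtain ⟨σ, hσ⟩ := hG
  refine ⟨_, G.isCycleBasis_image_of_linearIndependent hσ.1.linearIndependent_faceBoundary
    (fun c => hσ.1.faceBoundary_mem_cycleSpace c) hσ.card_compl_range_rootFace, fun e => ?_⟩
  refine (G.charge_image_le _ _ e).trans <| (Finset.card_le_card_of_injOn Subtype.val
    (t := {G.faceOf σ (e, true), G.faceOf σ (e, false)}) ?_ Subtype.val_injective.injOn).trans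
    Finset.card_le_two
  intro c hc
  simpa using G.eq_or_eq_of_faceBoundary_ne_zero σ (Finset.mem_filter.mp hc).2

section EdgeRestrict

variable (S : Set G.E)

def extendZero : ((G.edgeRestrict S).E → ZMod 2) →ₗ[ZMod 2] (G.E → ZMod 2) where
  toFun y e := if h : e ∈ S then y ⟨e, h⟩ else 0
  map_add' y z := funext fun e => by by_cases h : e ∈ S <;> simp [h]; rfl
  map_smul' r y := funext fun e => by by_cases h : e ∈ S <;> simp [h]; rfl

variable {G S}

@[simp]
theorem extendZero_apply_val (y : (G.edgeRestrict S).E → ZMod 2) (f : (G.edgeRestrict S).E) :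
    G.extendZero S y f.1 = y f :=
  dif_pos f.2

theorem extendZero_apply_of_mem (y : (G.edgeRestrict S).E → ZMod 2) {e : G.E} (he : e ∈ S) :
    G.extendZero S y e = y ⟨e, he⟩ :=
  dif_pos he

theorem extendZero_apply_of_notMem (y : (G.edgeRestrict S).E → ZMod 2) {e : G.E} (he : e ∉ S) :
    G.extendZero S y e = 0 :=
  dif_neg he

theorem extendZero_injective : Function.Injective (G.extendZero S) := fun y z h =>
  funext fun f => by simpa using congrFun h f.1

theorem extendZero_restrict {x : G.E → ZMod 2} (hx : ∀ e ∉ S, x e = 0) :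
    G.extendZero S (fun f => x f.1) = x :=
  funext fun e => by
    by_cases he : e ∈ S
    · exact extendZero_apply_of_mem _ he
    · rw [extendZero_apply_of_notMem _ he, hx e he]

theorem mem_cycleSpace_iff_restrict {x : G.E → ZMod 2} (hx : ∀ e ∉ S, x e = 0) :
    x ∈ G.cycleSpace ↔ (fun f => x f.1) ∈ (G.edgeRestrict S).cycleSpace := by
  have hsum : ∀ v, ∑ f : (G.edgeRestrict S).E, G.inc v f.1 * x f.1 = ∑ e, G.inc v e * x e :=
    fun v => (Finset.sum_subtype (F := (G.edgeRestrict S).fintE) (Finset.univ.filter (· ∈ S))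
      (by simp) (fun e => G.inc v e * x e)).symm.trans <|
        Finset.sum_filter_of_ne fun e _ hne => by_contra fun he => hne (by simp [hx e he])
  exact forall_congr' fun v => by rw [← hsum]; rfl

theorem extendZero_mem_cycleSpace {y : (G.edgeRestrict S).E → ZMod 2}
    (hy : y ∈ (G.edgeRestrict S).cycleSpace) : G.extendZero S y ∈ G.cycleSpace :=
  (mem_cycleSpace_iff_restrict fun _ he => extendZero_apply_of_notMem y he).mpr (by simpa)

theorem finrank_cycleSpace_le_finrank_edgeRestrict_add :
    Module.finrank (ZMod 2) G.cycleSpace ≤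
      Module.finrank (ZMod 2) (G.edgeRestrict S).cycleSpace + Nat.card ↥Sᶜ := by
  let π :=
    (LinearMap.funLeft (ZMod 2) (ZMod 2) ((↑) : ↥Sᶜ → G.E)).comp G.cycleSpace.subtype
  have hker : (LinearMap.ker π).map G.cycleSpace.subtype ≤
      (G.edgeRestrict S).cycleSpace.map (G.extendZero S) := by
    rintro _ ⟨x, hx, rfl⟩
    have hxS : ∀ e ∉ S, (x : G.E → ZMod 2) e = 0 := fun e he => congrFun hx ⟨e, he⟩
    exact ⟨_, (mem_cycleSpace_iff_restrict hxS).mp x.2, extendZero_restrict hxS⟩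
  have hrange : Module.finrank (ZMod 2) (LinearMap.range π) ≤ Nat.card ↥Sᶜ := by
    have := (LinearMap.range π).finrank_le
    rwa [Module.finrank_fintype_fun_eq_card, ← Nat.card_eq_fintype_card] at this
  have hkerle := (Submodule.finrank_mono hker).trans (Submodule.finrank_map_le _ _)
  rw [Submodule.finrank_map_subtype_eq] at hkerle
  have := LinearMap.finrank_range_add_finrank_ker π
  omega

variable {k : ℕ}

theorem exists_isKBasis_add_of_edgeRestrict (h : ∃ B, (G.edgeRestrict S).IsKBasis k B) :
    ∃ B, G.IsKBasis (k + Nat.card ↥Sᶜ) B := by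
  obtain ⟨B₀, ⟨hB₀Z, hB₀li, hB₀span⟩, hB₀k⟩ := h
  let B₁ := B₀.image (G.extendZero S)
  have hB₁li : LinearIndepOn (ZMod 2) id (B₁ : Set (G.E → ZMod 2)) := by
    have hB₀li' : LinearIndepOn (ZMod 2) id (B₀ : Set ((G.edgeRestrict S).E → ZMod 2)) :=
      hB₀li
    rw [Finset.coe_image]
    exact hB₀li'.id_imageₛ extendZero_injective.injOn
  have hB₁Z : ∀ x ∈ B₁, x ∈ G.cycleSpace := by
    simp only [B₁, Finset.mem_image]
    rintro _ ⟨y, hy, rfl⟩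
    exact extendZero_mem_cycleSpace (hB₀Z y hy)
  obtain ⟨B, hB₁B, hB⟩ := G.exists_isCycleBasis_superset hB₁Z hB₁li
  have hcard : B.card ≤ B₁.card + Nat.card ↥Sᶜ := by
    rw [hB.card_eq_finrank, Finset.card_image_of_injective _ extendZero_injective,
      IsCycleBasis.card_eq_finrank _ ⟨hB₀Z, hB₀li, hB₀span⟩]
    exact finrank_cycleSpace_le_finrank_edgeRestrict_add
  have hB₁k : ∀ e, G.charge B₁ e ≤ k := fun e => by
    refine (G.charge_image_le _ _ e).trans ?_
    by_cases he : e ∈ S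
    · simp only [extendZero_apply_of_mem _ he]
      exact hB₀k ⟨e, he⟩
    · simp [extendZero_apply_of_notMem _ he]
  refine ⟨B, hB, fun e => (G.charge_le_charge_add_card_sdiff B₁ B e).trans ?_⟩
  rw [Finset.card_sdiff_of_subset hB₁B]
  have := hB₁k e
  omega

end EdgeRestrict

end Multigraph

/-- Any graph with skewness `ℓ` (i.e., obtainable from a planar graph by
adding `ℓ` edges) has basis number at most `2 + ℓ`. -/
theorem basisNum_le_of_skewness (G : Multigraph) (ℓ : ℕ) (A : Finset G.E)
    (hA : A.card = ℓ) (hplanar : (G.edgeRestrict {e | e ∉ A}).IsPlanar) :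
    G.basisNum ≤ 2 + ℓ := by
  obtain ⟨B, hB⟩ :=
    G.exists_isKBasis_add_of_edgeRestrict (Multigraph.exists_isKBasis_two_of_isPlanar _ hplanar)
  have hcompl : Nat.card ↥({e | e ∉ A}ᶜ : Set G.E) = ℓ := by
    simp [hA]
  exact Nat.sInf_le ⟨B, hcompl ▸ hB⟩
end
end

section
/- For any graph G with blocks B_1,...,B_t, the basis number of G equals the maximum of the basis numbers of its blocks: b(G) = max_{1≤j≤t} b(B_j). -/
open scoped Classical

noncomputable section

namespace Multigraph

variable (G : Multigraph)

/-!
Every cycle lies in a single block, so restricting to a block maps the cycle space of `G`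
onto that of the block without increasing any charge: `b(B) ≤ b(G)`. Conversely the union of
optimal bases of the blocks, extended by zero, spans the cycle space of `G`, and an edge meets
only the vectors coming from its own block; a basis extracted from this spanning set shows
`b(G) ≤ max b(B)`. The graph-theoretic input is that the cycle space is spanned by circuits
(a nonzero even subgraph contains a cycle, found by a non-backtracking walk) and that lying on
a common cycle is transitive, which follows from circuit elimination in the cycle space.
-/

open Function

lemma zmod2_eq_zero_or_eq_one (a : ZMod 2) : a = 0 ∨ a = 1 := by revert a; decide

lemma zmod2_ne_zero_iff {a : ZMod 2} : a ≠ 0 ↔ a = 1 := by revert a; decide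

lemma zmod2_eq_of_support_eq {α : Type*} {x y : α → ZMod 2} (h : support x = support y) :
    x = y := by
  funext a
  have ha := Set.ext_iff.1 h a
  simp only [mem_support] at ha
  revert ha
  generalize x a = p
  generalize y a = q
  revert p q
  decide

lemma zmod2_support_add {α : Type*} (x y : α → ZMod 2) :
    support (x + y) = symmDiff (support x) (support y) := by
  ext a
  simp only [mem_support, Pi.add_apply, Set.mem_symmDiff]
  generalize x a = p
  generalize y a = q
  revert p q
  decide

lemma sum_eq_sum_comp_of_support_subset {ι κ M : Type*} [Fintype ι] [Fintype κ]
    [AddCommMonoid M] {g : κ → M} {es : ι → κ} (hes : Injective es)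
    (hg : support g ⊆ Set.range es) : ∑ j, g j = ∑ i, g (es i) :=
  (Fintype.sum_of_injective es hes _ g (fun _ hj => notMem_support.1 (hj ∘ (hg ·)))
    fun _ => rfl).symm

variable {G}

def Joins (G : Multigraph) (e : G.E) (a b : G.V) : Prop :=
  (G.fst e = a ∧ G.snd e = b) ∨ (G.fst e = b ∧ G.snd e = a)

lemma Joins.inc_eq {e : G.E} {a b : G.V} (h : G.Joins e a b) (v : G.V) :
    G.inc v e = (if a = v then 1 else 0) + (if b = v then 1 else 0) := by
  rcases h with ⟨h1, h2⟩ | ⟨h1, h2⟩ <;> rw [inc, h1, h2]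
  exact add_comm _ _

lemma exists_joins_of_inc_ne_zero {v : G.V} {e : G.E} (h : G.inc v e ≠ 0) :
    ∃ u, G.Joins e v u ∧ v ≠ u := by
  unfold inc at h
  by_cases h1 : G.fst e = v <;> by_cases h2 : G.snd e = v <;> simp only [h1, h2] at h
  · exact absurd rfl h
  · exact ⟨G.snd e, Or.inl ⟨h1, rfl⟩, fun h => h2 h.symm⟩
  · exact ⟨G.fst e, Or.inr ⟨rfl, h2⟩, fun h => h1 h.symm⟩
  · exact absurd rfl h

def IsCircuit (G : Multigraph) (x : G.E → ZMod 2) : Prop :=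
  ∃ (n : ℕ) (vs : Fin n → G.V) (es : Fin n → G.E),
    1 ≤ n ∧ G.IsCycleOn n vs es ∧ support x = Set.range es

lemma isCircuit_indicator {n : ℕ} {vs : Fin n → G.V} {es : Fin n → G.E} (hn : 1 ≤ n)
    (h : G.IsCycleOn n vs es) : G.IsCircuit ((Set.range es).indicator 1) :=
  ⟨n, vs, es, hn, h, by simp⟩

lemma IsCircuit.ne_zero {x : G.E → ZMod 2} (hx : G.IsCircuit x) : x ≠ 0 := by
  obtain ⟨n, vs, es, hn, -, hsupp⟩ := hx
  have h : es ⟨0, hn⟩ ∈ support x := hsupp ▸ Set.mem_range_self _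
  rintro rfl
  simp at h

lemma IsCircuit.mem_cycleSpace {x : G.E → ZMod 2} (hx : G.IsCircuit x) :
    x ∈ G.cycleSpace := by
  obtain ⟨n, vs, es, -, ⟨-, hes, hjoin⟩, hsupp⟩ := hx
  intro v
  have hone : ∀ i, x (es i) = 1 := fun i =>
    zmod2_ne_zero_iff.1 (show es i ∈ support x from hsupp ▸ Set.mem_range_self i)
  rw [sum_eq_sum_comp_of_support_subset hes ((support_mul_subset_right _ _).trans hsupp.le)]
  simp only [hone, mul_one, Joins.inc_eq (hjoin _), Finset.sum_add_distrib]
  rw [Equiv.sum_comp (finRotate n) (fun i => if vs i = v then (1 : ZMod 2) else 0)]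
  exact CharTwo.add_self_eq_zero _

open Fin.NatCast in
lemma apply_eq_of_comp_finRotate {α : Type*} {n : ℕ} {f : Fin n → α}
    (hf : ∀ i, f (finRotate n i) = f i) (i j : Fin n) : f i = f j := by
  obtain _ | m := n
  · exact i.elim0
  have key : ∀ k : ℕ, f (j + (k : Fin (m + 1))) = f j := by
    intro k
    induction k with
    | zero => simp
    | succ k ih => rw [Nat.cast_succ, ← add_assoc, ← finRotate_apply, hf, ih]
  simpa using key (i - j).val

lemma IsCircuit.eq_zero_or_eq_of_support_subset {x y : G.E → ZMod 2} (hx : G.IsCircuit x)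
    (hy : y ∈ G.cycleSpace) (hyx : support y ⊆ support x) : y = 0 ∨ y = x := by
  obtain ⟨n, vs, es, hn, ⟨hvs, hes, hjoin⟩, hsupp⟩ := hx
  rw [hsupp] at hyx
  -- parity at the vertex `vs (i + 1)`, met only by the edges `es i` and `es (i + 1)`
  have hrot : ∀ i, y (es (finRotate n i)) = y (es i) := by
    intro i
    have h := hy (vs (finRotate n i))
    rw [sum_eq_sum_comp_of_support_subset hes ((support_mul_subset_right _ _).trans hyx)] at h
    simp only [Joins.inc_eq (hjoin _), hvs.eq_iff, (finRotate n).injective.eq_iff, add_mul,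
      ite_mul, one_mul, zero_mul, Finset.sum_add_distrib, Finset.sum_ite_eq',
      Finset.mem_univ, if_true] at h
    exact CharTwo.add_eq_zero.1 h
  have hconst := apply_eq_of_comp_finRotate (f := y ∘ es) hrot
  rcases zmod2_eq_zero_or_eq_one (y (es ⟨0, hn⟩)) with h0 | h1
  · left
    funext e
    by_contra he
    obtain ⟨i, rfl⟩ := hyx he
    exact he ((hconst i _).trans h0)
  · right
    refine zmod2_eq_of_support_eq ((hyx.antisymm ?_).trans hsupp.symm)
    rintro _ ⟨i, rfl⟩
    rw [mem_support, show y (es i) = 1 from (hconst i _).trans h1]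
    exact one_ne_zero

lemma exists_lt_eq_injOn_Iio {α : Type*} [Finite α] (f : ℕ → α) :
    ∃ a b, a < b ∧ f a = f b ∧ Set.InjOn f (Set.Iio b) := by
  have hex : ∃ b a, a < b ∧ f a = f b := by
    obtain ⟨i, j, hij, hf⟩ := Finite.exists_ne_map_eq_of_infinite f
    rcases hij.lt_or_gt with h | h
    · exact ⟨j, i, h, hf⟩
    · exact ⟨i, j, h, hf.symm⟩
  obtain ⟨a, hab, hfab⟩ := Nat.find_spec hex
  refine ⟨a, Nat.find hex, hab, hfab, fun c hc d hd hcd => ?_⟩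
  by_contra hne
  rcases Ne.lt_or_gt hne with h | h
  · exact Nat.find_min hex hd ⟨c, h, hcd⟩
  · exact Nat.find_min hex hc ⟨d, h, hcd.symm⟩

lemma Joins.eq_and_eq_or {e : G.E} {a b c d : G.V} (h : G.Joins e a b) (h' : G.Joins e c d) :
    (a = c ∧ b = d) ∨ (a = d ∧ b = c) := by
  unfold Joins at h h'
  rcases h with ⟨h1, h2⟩ | ⟨h1, h2⟩ <;> rcases h' with ⟨h3, h4⟩ | ⟨h3, h4⟩ <;>
    subst h1 h2 <;> simp_all

lemma isCycleOn_of_joins {m : ℕ} {vs : Fin (m + 2) → G.V} {es : Fin (m + 2) → G.E}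
    (hvs : Injective vs) (hjoin : ∀ i, G.Joins (es i) (vs i) (vs (i + 1))) (h01 : es 0 ≠ es 1) :
    G.IsCycleOn (m + 2) vs es := by
  refine ⟨hvs, fun i j hij => ?_, fun i => by rw [finRotate_apply]; exact hjoin i⟩
  by_contra hne
  -- `es i = es j` with `i ≠ j` forces `i = j + 1` and `j = i + 1`, so the cycle has length 2
  have hi := hjoin i
  rw [hij] at hi
  rcases hi.eq_and_eq_or (hjoin j) with ⟨h, -⟩ | ⟨h1, h2⟩
  · exact hne (hvs h)
  obtain rfl := hvs h1
  obtain rfl : m = 0 := by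
    have htwo : (1 + 1 : Fin (m + 2)) = 0 := by simpa [add_assoc] using hvs h2
    have hmod := congrArg Fin.val htwo
    rw [Fin.val_add, Fin.val_one, Fin.val_zero] at hmod
    have := Nat.le_of_dvd two_pos (Nat.dvd_of_mod_eq_zero hmod)
    omega
  fin_cases j <;> simp_all

lemma exists_isCycleOn_of_walk {w : ℕ → G.V} {ε : ℕ → G.E}
    (hjoin : ∀ k, G.Joins (ε k) (w k) (w (k + 1))) (hw : ∀ k, w k ≠ w (k + 1))
    (hε : ∀ k, ε (k + 1) ≠ ε k) :
    ∃ n vs es, 1 ≤ n ∧ G.IsCycleOn n vs es ∧ Set.range es ⊆ Set.range ε := by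
  obtain ⟨a, b, hab, hwab, hinj⟩ := exists_lt_eq_injOn_Iio w
  obtain ⟨m, rfl⟩ : ∃ m, b = a + (m + 2) := by
    have : b ≠ a + 1 := by rintro rfl; exact hw a hwab
    exact ⟨b - a - 2, by omega⟩
  have hnext : ∀ i : Fin (m + 2), w (a + i + 1) = w (a + (i + 1 : Fin (m + 2))) := by
    intro i
    rw [Fin.val_add_one]
    split_ifs with h
    · subst h
      simp [hwab, Nat.add_assoc]
    · rfl
  refine ⟨m + 2, fun i => w (a + i), fun i => ε (a + i), by omega,
    isCycleOn_of_joins (fun i j h => Fin.ext ?_) (fun i => hnext i ▸ hjoin (a + i)) ?_, ?_⟩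
  · have := hinj (by simp) (by simp) h
    omega
  · simpa using (hε a).symm
  · rintro _ ⟨i, rfl⟩
    exact ⟨_, rfl⟩

lemma exists_joins_ne_of_mem_cycleSpace {x : G.E → ZMod 2} (hx : x ∈ G.cycleSpace)
    {e : G.E} {a b : G.V} (he : x e ≠ 0) (hj : G.Joins e a b) (hab : a ≠ b) :
    ∃ e' c, e' ≠ e ∧ x e' ≠ 0 ∧ G.Joins e' b c ∧ b ≠ c := by
  have hsum := hx b
  rw [← Finset.add_sum_erase _ _ (Finset.mem_univ e), hj.inc_eq, if_neg hab, if_pos rfl,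
    zero_add, one_mul, zmod2_ne_zero_iff.1 he, CharTwo.add_eq_zero] at hsum
  obtain ⟨e', he', hne⟩ := Finset.exists_ne_zero_of_sum_ne_zero (hsum ▸ one_ne_zero :
    ∑ f ∈ Finset.univ.erase e, G.inc b f * x f ≠ 0)
  obtain ⟨c, hjc, hbc⟩ := exists_joins_of_inc_ne_zero (left_ne_zero_of_mul hne)
  exact ⟨e', c, Finset.ne_of_mem_erase he', right_ne_zero_of_mul hne, hjc, hbc⟩

lemma exists_walk_of_mem_cycleSpace {x : G.E → ZMod 2} (hx : x ∈ G.cycleSpace)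
    {e : G.E} {a b : G.V} (he : x e ≠ 0) (hj : G.Joins e a b) (hab : a ≠ b) :
    ∃ (w : ℕ → G.V) (ε : ℕ → G.E), (∀ k, G.Joins (ε k) (w k) (w (k + 1))) ∧
      (∀ k, w k ≠ w (k + 1)) ∧ (∀ k, ε (k + 1) ≠ ε k) ∧ ∀ k, x (ε k) ≠ 0 := by
  let State :=
    {s : G.E × G.V × G.V // x s.1 ≠ 0 ∧ G.Joins s.1 s.2.1 s.2.2 ∧ s.2.1 ≠ s.2.2}
  have hstep : ∀ s : State, ∃ t : State, t.1.1 ≠ s.1.1 ∧ t.1.2.1 = s.1.2.2 := by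
    rintro ⟨⟨e, a, b⟩, he, hj, hab⟩
    obtain ⟨e', c, hne, he', hj', hbc⟩ := exists_joins_ne_of_mem_cycleSpace hx he hj hab
    exact ⟨⟨(e', b, c), he', hj', hbc⟩, hne, rfl⟩
  choose next hnext using hstep
  let s : ℕ → State := fun k => next^[k] ⟨(e, a, b), he, hj, hab⟩
  have hs : ∀ k, s (k + 1) = next (s k) := fun k => iterate_succ_apply' _ _ _
  refine ⟨fun k => (s k).1.2.1, fun k => (s k).1.1, fun k => ?_, fun k => ?_, fun k => ?_,
    fun k => (s k).2.1⟩
  · dsimp only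
    rw [hs, (hnext _).2]
    exact (s k).2.2.1
  · dsimp only
    rw [hs, (hnext _).2]
    exact (s k).2.2.2
  · dsimp only
    rw [hs]
    exact (hnext _).1

lemma exists_isCircuit_support_subset {x : G.E → ZMod 2} (hx : x ∈ G.cycleSpace)
    (hx0 : x ≠ 0) : ∃ c, G.IsCircuit c ∧ support c ⊆ support x := by
  suffices ∃ n vs es, 1 ≤ n ∧ G.IsCycleOn n vs es ∧ Set.range es ⊆ support x by
    obtain ⟨n, vs, es, hn, h, hsub⟩ := this
    exact ⟨_, isCircuit_indicator hn h, by simpa using hsub⟩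
  obtain ⟨e, he⟩ := Function.ne_iff.1 hx0
  by_cases hloop : G.fst e = G.snd e
  · refine ⟨1, fun _ => G.fst e, fun _ => e, le_rfl, ⟨fun i j _ => Subsingleton.elim i j,
      fun i j _ => Subsingleton.elim i j, fun _ => Or.inl ⟨rfl, hloop.symm⟩⟩, ?_⟩
    rintro _ ⟨_, rfl⟩
    exact he
  · obtain ⟨w, ε, hjoin, hw, hε, hxε⟩ :=
      exists_walk_of_mem_cycleSpace hx he (Or.inl ⟨rfl, rfl⟩) hloop
    obtain ⟨n, vs, es, hn, h, hsub⟩ := exists_isCycleOn_of_walk hjoin hw hε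
    exact ⟨n, vs, es, hn, h, hsub.trans (Set.range_subset_iff.2 hxε)⟩

lemma mem_span_isCircuit_of_mem_cycleSpace {x : G.E → ZMod 2} (hx : x ∈ G.cycleSpace) :
    x ∈ Submodule.span (ZMod 2) {c | G.IsCircuit c ∧ support c ⊆ support x} := by
  induction hn : (support x).ncard using Nat.strong_induction_on generalizing x with
  | _ n ih =>
  by_cases hx0 : x = 0
  · exact hx0 ▸ Submodule.zero_mem _
  obtain ⟨c, hc, hcx⟩ := exists_isCircuit_support_subset hx hx0
  have hxc : support (x + c) ⊂ support x := by
    rw [zmod2_support_add, symmDiff_of_ge hcx]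
    exact hcx.sdiff_ssubset_of_nonempty (support_nonempty_iff.2 hc.ne_zero)
  have hmem := ih _ (hn ▸ Set.ncard_lt_ncard hxc) (add_mem hx hc.mem_cycleSpace) rfl
  have hspan : Submodule.span (ZMod 2) {d | G.IsCircuit d ∧ support d ⊆ support (x + c)} ≤
      Submodule.span (ZMod 2) {d | G.IsCircuit d ∧ support d ⊆ support x} :=
    Submodule.span_mono fun d hd => ⟨hd.1, hd.2.trans hxc.le⟩
  simpa using sub_mem (hspan hmem) (Submodule.subset_span ⟨hc, hcx⟩)

lemma cycleSpace_eq_span_isCircuit :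
    G.cycleSpace = Submodule.span (ZMod 2) {c | G.IsCircuit c} :=
  le_antisymm (fun _ hx => Submodule.span_mono (fun _ hc => hc.1)
    (mem_span_isCircuit_of_mem_cycleSpace hx))
    (Submodule.span_le.2 fun _ hc => IsCircuit.mem_cycleSpace hc)

lemma exists_isCircuit_apply_ne_zero {x : G.E → ZMod 2} (hx : x ∈ G.cycleSpace) {e : G.E}
    (he : x e ≠ 0) : ∃ c, G.IsCircuit c ∧ c e ≠ 0 ∧ support c ⊆ support x := by
  -- otherwise every circuit spanning `x` vanishes at `e`, hence so does `x`
  by_contra! h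
  refine he (Submodule.span_le.2 (fun c hc => ?_) (mem_span_isCircuit_of_mem_cycleSpace hx) :
    x ∈ LinearMap.ker (LinearMap.proj e))
  by_contra hce
  exact h c hc.1 hce hc.2

lemma IsCircuit.exists_isCircuit_of_inter {x y : G.E → ZMod 2} (hx : G.IsCircuit x)
    (hy : G.IsCircuit y) (hxy : (support x ∩ support y).Nonempty) {e g : G.E}
    (he : x e ≠ 0) (hg : y g ≠ 0) : ∃ z, G.IsCircuit z ∧ z e ≠ 0 ∧ z g ≠ 0 := by
  -- induction on `|y \ x|`: a circuit `c ⊆ x + y` through `g` either passes through `e`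
  -- or has fewer edges outside `x` than `y`
  induction hn : (support y \ support x).ncard using Nat.strong_induction_on generalizing y with
  | _ n ih =>
  obtain hxg | hxg := ne_or_eq (x g) 0
  · exact ⟨x, hx, he, hxg⟩
  obtain hye | hye := ne_or_eq (y e) 0
  · exact ⟨y, hy, hye, hg⟩
  obtain ⟨h, hxh, hyh⟩ := hxy
  have hw : x + y ∈ G.cycleSpace := add_mem hx.mem_cycleSpace hy.mem_cycleSpace
  obtain ⟨c, hc, hcg, hcw⟩ :=
    exists_isCircuit_apply_ne_zero hw (by simpa [hxg] using hg : (x + y) g ≠ 0)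
  obtain hce | hce := ne_or_eq (c e) 0
  · exact ⟨c, hc, hce, hcg⟩
  have hwh : (x + y) h = 0 := by
    simp only [Pi.add_apply, zmod2_ne_zero_iff.1 hxh, zmod2_ne_zero_iff.1 hyh]
    rfl
  have hch : c h = 0 := notMem_support.1 fun hch => hcw hch hwh
  have hcy : support c \ support x ⊆ support y \ support x := fun p ⟨hcp, hxp⟩ =>
    ⟨by simpa [notMem_support.1 hxp] using hcw hcp, hxp⟩
  -- `c` meets `x`: otherwise `c ⊆ y`, so `c = y` by minimality, but `h ∈ y \ c`
  have hcx : (support x ∩ support c).Nonempty := by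
    by_contra hdisj
    rw [Set.not_nonempty_iff_eq_empty, ← Set.disjoint_iff_inter_eq_empty] at hdisj
    have := hy.eq_zero_or_eq_of_support_subset hc.mem_cycleSpace
      (fun p hp => (hcy ⟨hp, hdisj.notMem_of_mem_right hp⟩).1)
    rcases this with h0 | rfl
    · exact hc.ne_zero h0
    · exact hyh hch
  -- the new measure is smaller: otherwise `c + (x + y) ⊆ x`, so it is `0` or `x`,
  -- forcing `c e ≠ 0` or `x h = 0`
  have hlt : support c \ support x ⊂ support y \ support x := by
    refine hcy.ssubset_of_ne fun heq => ?_
    have hu : support (c + (x + y)) ⊆ support x := by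
      rw [zmod2_support_add, symmDiff_of_le hcw]
      rintro p ⟨hwp, hcp⟩
      by_contra hxp
      exact hcp (heq ▸ ⟨by simpa [notMem_support.1 hxp] using hwp, hxp⟩ :
        p ∈ support c \ support x).1
    rcases hx.eq_zero_or_eq_of_support_subset (add_mem hc.mem_cycleSpace hw) hu with h0 | hux
    · exact he (by simpa [hce, hye] using congrFun h0 e)
    · have := congrFun hux h
      simp only [Pi.add_apply, hch, hwh, add_zero] at this
      exact hxh this.symm
  exact ih _ (hn ▸ Set.ncard_lt_ncard hlt) hc hcx hcg rfl

lemma blockRel_iff {e f : G.E} :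
    G.BlockRel e f ↔ e = f ∨ ∃ c, G.IsCircuit c ∧ c e ≠ 0 ∧ c f ≠ 0 := by
  refine or_congr Iff.rfl ⟨?_, ?_⟩
  · rintro ⟨n, vs, es, hn, hcyc, he, hf⟩
    exact ⟨_, isCircuit_indicator hn hcyc, by simpa using he, by simpa using hf⟩
  · rintro ⟨c, ⟨n, vs, es, hn, hcyc, hsupp⟩, he, hf⟩
    exact ⟨n, vs, es, hn, hcyc, (hsupp ▸ he : e ∈ Set.range es),
      (hsupp ▸ hf : f ∈ Set.range es)⟩

lemma blockRel_equivalence : Equivalence G.BlockRel where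
  refl _ := Or.inl rfl
  symm h := by
    rcases blockRel_iff.1 h with rfl | ⟨c, hc, he, hf⟩
    exacts [Or.inl rfl, blockRel_iff.2 (Or.inr ⟨c, hc, hf, he⟩)]
  trans h₁ h₂ := by
    rcases blockRel_iff.1 h₁ with rfl | ⟨x, hx, hxe, hxf⟩
    · exact h₂
    rcases blockRel_iff.1 h₂ with rfl | ⟨y, hy, hyf, hyg⟩
    · exact h₁
    exact blockRel_iff.2 (Or.inr (hx.exists_isCircuit_of_inter hy ⟨_, hxf, hyf⟩ hxe hyg))

def block (G : Multigraph) (e : G.E) : Set G.E := {f | G.BlockRel e f}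

lemma block_eq_of_mem {e f : G.E} (h : f ∈ G.block e) : G.block e = G.block f :=
  Set.ext fun _ => ⟨blockRel_equivalence.trans (blockRel_equivalence.symm h),
    blockRel_equivalence.trans h⟩

lemma IsCircuit.support_subset_block {c : G.E → ZMod 2} (hc : G.IsCircuit c) {e : G.E}
    (he : c e ≠ 0) : support c ⊆ G.block e :=
  fun _ hf => blockRel_iff.2 (Or.inr ⟨c, hc, he, hf⟩)

lemma IsCircuit.support_subset_block_or_disjoint {c : G.E → ZMod 2} (hc : G.IsCircuit c)
    (e : G.E) : support c ⊆ G.block e ∨ Disjoint (support c) (G.block e) := by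
  refine or_iff_not_imp_right.2 fun h => ?_
  obtain ⟨f, hfc, hfe⟩ := Set.not_disjoint_iff.1 h
  exact block_eq_of_mem hfe ▸ hc.support_subset_block hfc

variable {S : Set G.E}

def toEdgeRestrict (G : Multigraph) (S : Set G.E) :
    (G.E → ZMod 2) →ₗ[ZMod 2] ((G.edgeRestrict S).E → ZMod 2) :=
  LinearMap.funLeft (ZMod 2) (ZMod 2) Subtype.val

def ofEdgeRestrict (G : Multigraph) (S : Set G.E) :
    ((G.edgeRestrict S).E → ZMod 2) →ₗ[ZMod 2] (G.E → ZMod 2) :=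
  ExtendByZero.linearMap (ZMod 2) Subtype.val

@[simp]
lemma ofEdgeRestrict_apply_val (y : (G.edgeRestrict S).E → ZMod 2) (f : (G.edgeRestrict S).E) :
    G.ofEdgeRestrict S y f.1 = y f :=
  Subtype.val_injective.extend_apply _ _ _

lemma support_ofEdgeRestrict_subset (y : (G.edgeRestrict S).E → ZMod 2) :
    support (G.ofEdgeRestrict S y) ⊆ S := by
  intro f hf
  by_contra hfS
  exact hf (extend_apply' _ _ _ fun ⟨g, hg⟩ => hfS (hg ▸ g.2))

lemma toEdgeRestrict_ofEdgeRestrict (y : (G.edgeRestrict S).E → ZMod 2) :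
    G.toEdgeRestrict S (G.ofEdgeRestrict S y) = y :=
  funext fun f => ofEdgeRestrict_apply_val y f

lemma ofEdgeRestrict_toEdgeRestrict {x : G.E → ZMod 2} (hx : support x ⊆ S) :
    G.ofEdgeRestrict S (G.toEdgeRestrict S x) = x := by
  funext f
  by_cases hf : f ∈ S
  · exact ofEdgeRestrict_apply_val _ ⟨f, hf⟩
  · rw [notMem_support.1 fun h => hf (support_ofEdgeRestrict_subset _ h),
      notMem_support.1 fun h => hf (hx h)]

lemma ofEdgeRestrict_mem_cycleSpace_iff {y : (G.edgeRestrict S).E → ZMod 2} :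
    G.ofEdgeRestrict S y ∈ G.cycleSpace ↔ y ∈ (G.edgeRestrict S).cycleSpace := by
  refine forall_congr' fun v => ?_
  rw [sum_eq_sum_comp_of_support_subset (ι := (G.edgeRestrict S).E) (es := Subtype.val)
    Subtype.val_injective ((support_mul_subset_right _ _).trans
      ((support_ofEdgeRestrict_subset y).trans Subtype.range_val.ge)),
    Finset.sum_congr rfl fun f _ => by rw [ofEdgeRestrict_apply_val]]
  rfl

lemma toEdgeRestrict_mem_cycleSpace {x : G.E → ZMod 2} (hx : x ∈ G.cycleSpace)
    (hxS : support x ⊆ S) : G.toEdgeRestrict S x ∈ (G.edgeRestrict S).cycleSpace := by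
  rwa [← ofEdgeRestrict_mem_cycleSpace_iff, ofEdgeRestrict_toEdgeRestrict hxS]

lemma toEdgeRestrict_block_mem_cycleSpace {x : G.E → ZMod 2} (hx : x ∈ G.cycleSpace) (e : G.E) :
    G.toEdgeRestrict (G.block e) x ∈ (G.edgeRestrict (G.block e)).cycleSpace := by
  rw [cycleSpace_eq_span_isCircuit] at hx
  refine (Submodule.span_le (p := (G.edgeRestrict (G.block e)).cycleSpace.comap
    (G.toEdgeRestrict (G.block e)))).2 (fun c hc => ?_) hx
  rcases hc.support_subset_block_or_disjoint e with h | h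
  · exact toEdgeRestrict_mem_cycleSpace hc.mem_cycleSpace h
  · have h0 : G.toEdgeRestrict (G.block e) c = 0 :=
      funext fun f => notMem_support.1 (h.notMem_of_mem_right f.2)
    simp [h0]

lemma exists_isCycleBasis_subset {T : Finset (G.E → ZMod 2)}
    (hT : Submodule.span (ZMod 2) (T : Set (G.E → ZMod 2)) = G.cycleSpace) :
    ∃ B ⊆ T, G.IsCycleBasis B := by
  obtain ⟨b, hbT, hspan, hli⟩ := exists_linearIndependent (ZMod 2) (T : Set (G.E → ZMod 2))
  lift b to Finset (G.E → ZMod 2) using T.finite_toSet.subset hbT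
  exact ⟨b, Finset.coe_subset.1 hbT, fun x hx => hT ▸ Submodule.subset_span (hbT hx), hli,
    hspan.trans hT⟩

lemma charge_mono {B B' : Finset (G.E → ZMod 2)} (h : B ⊆ B') (e : G.E) :
    G.charge B e ≤ G.charge B' e :=
  Finset.card_le_card (Finset.filter_subset_filter _ h)

lemma charge_image_le_s6 {H : Multigraph} (φ : (G.E → ZMod 2) → (H.E → ZMod 2))
    (B : Finset (G.E → ZMod 2)) {e' : H.E} {e : G.E} (h : ∀ x, φ x e' ≠ 0 → x e ≠ 0) :
    H.charge (B.image φ) e' ≤ G.charge B e := by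
  unfold charge
  rw [Finset.filter_image]
  exact Finset.card_image_le.trans
    (Finset.card_le_card (Finset.monotone_filter_right _ fun x _ => h x))

lemma basisNum_le_of_span {T : Finset (G.E → ZMod 2)}
    (hT : Submodule.span (ZMod 2) (T : Set (G.E → ZMod 2)) = G.cycleSpace) {k : ℕ}
    (hk : ∀ e, G.charge T e ≤ k) : G.basisNum ≤ k := by
  obtain ⟨B, hBT, hB⟩ := exists_isCycleBasis_subset hT
  exact Nat.sInf_le ⟨B, hB, fun e => (charge_mono hBT e).trans (hk e)⟩

section

variable (G)

lemma exists_isKBasis_basisNum : ∃ B, G.IsKBasis G.basisNum B := by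
  refine Nat.sInf_mem (s := {k | ∃ B, G.IsKBasis k B}) ?_
  obtain ⟨B, -, hB⟩ :=
    exists_isCycleBasis_subset (T := Finset.univ.filter (· ∈ G.cycleSpace)) (by simp)
  exact ⟨_, B, hB, fun e => Finset.card_filter_le _ _⟩

lemma basisNum_block_le (e : G.E) :
    (G.edgeRestrict (G.block e)).basisNum ≤ G.basisNum := by
  obtain ⟨B, ⟨-, -, hB⟩, hcharge⟩ := exists_isKBasis_basisNum G
  refine basisNum_le_of_span (T := B.image (G.toEdgeRestrict (G.block e)))
    (le_antisymm ?_ fun z hz => ?_)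
    fun f => (charge_image_le_s6 (G.toEdgeRestrict (G.block e)) B fun _ h => h).trans (hcharge f.1)
  · rw [Finset.coe_image, Submodule.span_le]
    rintro _ ⟨x, hx, rfl⟩
    exact toEdgeRestrict_block_mem_cycleSpace (hB ▸ Submodule.subset_span hx) e
  · have hz' := Submodule.mem_map_of_mem (f := G.toEdgeRestrict (G.block e))
      (hB.symm ▸ ofEdgeRestrict_mem_cycleSpace_iff.2 hz)
    rwa [Submodule.map_span, toEdgeRestrict_ofEdgeRestrict, ← Finset.coe_image] at hz'

def optimalBasis : Finset (G.E → ZMod 2) := (exists_isKBasis_basisNum G).choose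

lemma isKBasis_optimalBasis : G.IsKBasis G.basisNum G.optimalBasis :=
  (exists_isKBasis_basisNum G).choose_spec

def liftedOptimalBasis (S : Set G.E) : Finset (G.E → ZMod 2) :=
  (G.edgeRestrict S).optimalBasis.image (G.ofEdgeRestrict S)

def blockBases : Finset (G.E → ZMod 2) :=
  Finset.univ.biUnion fun e => G.liftedOptimalBasis (G.block e)

lemma span_blockBases :
    Submodule.span (ZMod 2) (G.blockBases : Set (G.E → ZMod 2)) = G.cycleSpace := by
  refine le_antisymm (Submodule.span_le.2 ?_) ?_
  · intro z hz
    simp only [blockBases, liftedOptimalBasis, Finset.coe_biUnion, Finset.coe_image,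
      Set.mem_iUnion] at hz
    obtain ⟨e, -, y, hy, rfl⟩ := hz
    exact ofEdgeRestrict_mem_cycleSpace_iff.2 ((isKBasis_optimalBasis _).1.1 y hy)
  · rw [cycleSpace_eq_span_isCircuit, Submodule.span_le]
    intro c hc
    obtain ⟨e, he⟩ := Function.ne_iff.1 hc.ne_zero
    have hS := hc.support_subset_block he
    have hy := Submodule.mem_map_of_mem (f := G.ofEdgeRestrict (G.block e))
      ((isKBasis_optimalBasis _).1.2.2 ▸ toEdgeRestrict_mem_cycleSpace hc.mem_cycleSpace hS)
    rw [Submodule.map_span, ofEdgeRestrict_toEdgeRestrict hS, ← Finset.coe_image] at hy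
    exact Submodule.span_mono (Finset.coe_subset.2
      (Finset.subset_biUnion_of_mem _ (Finset.mem_univ e))) hy

lemma charge_blockBases_le (f : G.E) :
    G.charge G.blockBases f ≤ (G.edgeRestrict (G.block f)).basisNum := by
  have hff : f ∈ G.block f := blockRel_equivalence.refl f
  have hsub : G.blockBases.filter (· f ≠ 0) ⊆
      (G.liftedOptimalBasis (G.block f)).filter (· f ≠ 0) := by
    intro z hz
    simp only [blockBases, Finset.mem_filter, Finset.mem_biUnion] at hz
    obtain ⟨⟨e, -, hz⟩, hzf⟩ := hz
    have hfe : f ∈ G.block e := by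
      obtain ⟨y, -, rfl⟩ := Finset.mem_image.1 hz
      exact support_ofEdgeRestrict_subset y hzf
    rw [block_eq_of_mem hfe] at hz
    exact Finset.mem_filter.2 ⟨hz, hzf⟩
  calc G.charge G.blockBases f
      ≤ G.charge (G.liftedOptimalBasis (G.block f)) f := Finset.card_le_card hsub
    _ ≤ (G.edgeRestrict (G.block f)).charge (G.edgeRestrict (G.block f)).optimalBasis
          ⟨f, hff⟩ :=
        charge_image_le_s6 _ _ fun y hy => ofEdgeRestrict_apply_val y ⟨f, hff⟩ ▸ hy
    _ ≤ _ := (isKBasis_optimalBasis _).2 _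

end

end Multigraph

/-- For any graph `G`, the basis number of `G` equals the maximum of the basis
numbers of its blocks.  (Blocks are the classes of the equivalence relation "equal, or lying on
a common cycle" on edges, i.e. the maximal 2-connected subgraphs and bridges.) -/
theorem basisNum_eq_sup_blocks (G : Multigraph) :
    G.basisNum =
      sSup {k | ∃ e : G.E, k = (G.edgeRestrict {f | G.BlockRel e f}).basisNum} := by
  have hbdd : BddAbove {k | ∃ e : G.E, k = (G.edgeRestrict {f | G.BlockRel e f}).basisNum} :=
    ⟨G.basisNum, by rintro _ ⟨e, rfl⟩; exact G.basisNum_block_le e⟩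
  refine le_antisymm ?_ (csSup_le' ?_)
  · exact Multigraph.basisNum_le_of_span G.span_blockBases fun f =>
      (G.charge_blockBases_le f).trans (le_csSup hbdd ⟨f, rfl⟩)
  · rintro _ ⟨e, rfl⟩
    exact G.basisNum_block_le e
end
end
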